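/- For every i ≥ 1 one has the operator identities B_i∘D_i = B_i∘T_i = B_i∘∂_i on Poly; consequently, for every f ∈ Poly⁺ the finitely supported sums satisfy Σ_{i≥1} B_i(∂_i f) = f and Σ_{i≥1} B_i(T_i f) = f, i.e. the slide creators B_i are simultaneously creation operators for the divided differences ∂_i and for the quasisymmetric divided differences T_i. -/

import Mathlib

/-
Conventions: `Pol = MvPolynomial ℕ ℤ` with the Lean variable `X i` representing
the paper's variable `x_{i+1}` (0-indexed).  All operators carrying a paper index
`i ≥ 1` are represented by Lean operators indexed by `i : ℕ` (Lean `i` ↔ paper `i+1`),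
and sequences of positive integers are represented by sequences of natural numbers
(entry `v` ↔ paper entry `v+1`).
-/

open MvPolynomial
open scoped Classical

abbrev Pol := MvPolynomial ℕ ℤ

noncomputable section

/-- Interchange the variables `x_{i+1}` and `x_{i+2}` (paper indexing). -/
def swapVar (i : ℕ) (f : Pol) : Pol := rename (Equiv.swap i (i+1)) f

/-- Exact division: the unique `g` with `d * g = f` when it exists (`0` otherwise). -/
def exactDiv (d f : Pol) : Pol := if h : ∃ g : Pol, d * g = f then h.choose else 0

/-- The divided difference operator `∂_{i+1}` (paper indexing). -/
def ddiff (i : ℕ) (f : Pol) : Pol := exactDiv (X i - X (i+1)) (f - swapVar i f)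

/-- The Bergeron–Sottile operator `R_{i+1}` (paper indexing): `x_j ↦ x_j` for
`j < i+1`, `x_{i+1} ↦ 0`, `x_j ↦ x_{j-1}` for `j > i+1`. -/
def BS (i : ℕ) : Pol →ₐ[ℤ] Pol :=
  aeval fun j => if j < i then X j else if j = i then 0 else X (j-1)

/-- `m`-fold iterate of `BS i`. -/
def BSit (i m : ℕ) (f : Pol) : Pol := (fun g => BS i g)^[m] f

/-- `Z g = Σ_{k ≥ 0} R₁ᵏ g`. -/
def Zop (f : Pol) : Pol := ∑ᶠ k : ℕ, BSit 0 k f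

/-- `Z^{(m)} g = Σ_{k ≥ 0} R₁^{km} g`. -/
def Zm (m : ℕ) (f : Pol) : Pol := ∑ᶠ k : ℕ, BSit 0 (k * m) f

/-- The truncation operator keeping the first `n` variables: `Π_n` in paper indexing. -/
def truncOp (n : ℕ) : Pol →ₐ[ℤ] Pol := aeval fun j => if j < n then X j else 0

/-- The quasisymmetric divided difference `T_{i+1}` defined as the exact quotient
`((R_{i+2} - R_{i+1})f)/x_{i+1}` (paper indexing). -/
def TqDiv (i : ℕ) (f : Pol) : Pol := exactDiv (X i) (BS (i+1) f - BS i f)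

/-- The quasisymmetric divided difference `T_{i+1} = R_{i+1} ∘ ∂_{i+1}` (paper indexing). -/
def Tq (i : ℕ) (f : Pol) : Pol := BS i (ddiff i f)

/-- The `m`-quasisymmetric divided difference `T^{(m)}_{i+1}` (paper indexing). -/
def Tm (m i : ℕ) (f : Pol) : Pol := exactDiv (X i) (BSit (i+1) m f - BSit i m f)

/-- The slide extractor `D_{i+1} = Π_{i+1} ∘ ∂_{i+1}` (paper indexing). -/
def Dop (i : ℕ) (f : Pol) : Pol := truncOp (i+1) (ddiff i f)

/-- The `m`-slide extractor `D^{(m)}_{i+1} = Π_{i+1} ∘ T^{(m)}_{i+1}` (paper indexing). -/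
def Dm (m i : ℕ) (f : Pol) : Pol := truncOp (i+1) (Tm m i f)

/-- The slide creator `B_{i+1} f = Σ_{k=1}^{i+1} x_k · R_k^{i+1-k}(Π_{i+1} f)` (paper indexing). -/
def Bop (i : ℕ) (f : Pol) : Pol :=
  ∑ k ∈ Finset.range (i+1), X k * BSit k (i - k) (truncOp (i+1) f)

/-- The creation operator `Z ∘ x_{i+1} ∘ R_{i+1}` (paper indexing). -/
def crea (i : ℕ) (f : Pol) : Pol := Zop (X i * BS i f)

/-- A permutation of `{0,1,2,…}` is finitely supported if it fixes all but
finitely many points. -/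
def FinSupp (w : Equiv.Perm ℕ) : Prop := Set.Finite {x | w x ≠ x}

/-- Coxeter length: the minimal `k` such that `w` is a product of `k` simple
transpositions. -/
def len (w : Equiv.Perm ℕ) : ℕ :=
  sInf {k | ∃ l : List ℕ, l.length = k ∧ (l.map fun i => Equiv.swap i (i+1)).prod = w}

/-- The set of reduced words for `w`. -/
def Red (w : Equiv.Perm ℕ) : Set (List ℕ) :=
  {l | l.length = len w ∧ (l.map fun i => Equiv.swap i (i+1)).prod = w}

/-- A family of polynomials indexed by permutations is a family of Schubert
polynomials if: each member is homogeneous of degree the length, the identity is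
sent to `1`, and divided differences act as expected (all this for finitely
supported permutations). -/
def IsSchubertFamily (S : Equiv.Perm ℕ → Pol) : Prop :=
  (∀ w, FinSupp w → (S w).IsHomogeneous (len w)) ∧
  S 1 = 1 ∧
  ∀ w, FinSupp w → ∀ i : ℕ,
    ddiff i (S w) = if w (i+1) < w i then S (w * Equiv.swap i (i+1)) else 0

/-- `b` is a compatible sequence for `a`. -/
def Compat {k : ℕ} (a b : Fin k → ℕ) : Prop :=
  Monotone b ∧ (∀ j, b j ≤ a j) ∧
  ∀ (j : ℕ) (h : j + 1 < k),
    a ⟨j, Nat.lt_of_succ_lt h⟩ < a ⟨j+1, h⟩ → b ⟨j, Nat.lt_of_succ_lt h⟩ < b ⟨j+1, h⟩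

/-- The slide polynomial `𝔉_a`, as the sum of the monomials of all compatible
sequences for `a`. -/
def slide {k : ℕ} (a : Fin k → ℕ) : Pol :=
  ∑ᶠ b ∈ {b : Fin k → ℕ | Compat a b}, ∏ j, X (b j)

/-- `b` is an `m`-compatible sequence for `a` (entrywise congruent mod `m`). -/
def MCompat (m : ℕ) {k : ℕ} (a b : Fin k → ℕ) : Prop :=
  Monotone b ∧ (∀ j, b j ≤ a j ∧ b j % m = a j % m) ∧
  ∀ (j : ℕ) (h : j + 1 < k),
    a ⟨j, Nat.lt_of_succ_lt h⟩ < a ⟨j+1, h⟩ → b ⟨j, Nat.lt_of_succ_lt h⟩ < b ⟨j+1, h⟩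

/-- The `m`-slide polynomial `𝔉ᵐ_a`. -/
def mslide (m : ℕ) {k : ℕ} (a : Fin k → ℕ) : Pol :=
  ∑ᶠ b ∈ {b : Fin k → ℕ | MCompat m a b}, ∏ j, X (b j)

/-- Value of the `m`-slide creator `B^{(m)}_{a+1}` (paper indexing) on the monomial with
exponent vector `d`. -/
def BmMono (m a : ℕ) (d : ℕ →₀ ℕ) : Pol :=
  if ∃ t, a < t ∧ d t ≠ 0 then 0
  else monomial (d.erase a) 1 *
    ∑ r ∈ Finset.range (a+1),
      if r * m ≤ a ∧ ∀ t, t < a → d t ≠ 0 → t < a - r * m then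
        X (a - r * m) ^ (d a + 1) else 0

/-- The `m`-slide creator `B^{(m)}_{a+1}` (paper indexing), extended linearly from
its values on monomials. -/
def Bm (m a : ℕ) (f : Pol) : Pol := ∑ d ∈ f.support, C (f.coeff d) * BmMono m a d

end

/-!
Write `B_i, ∂_i, T_i, D_i, s_i, R_k, Π_n` for `Bop i, ddiff i, Tq i, Dop i, swapVar i, BS k,
truncOp n`, so that the variables are `x_0, x_1, …`.

`B_i g` only sees `Π_{i+1} g`, and `Π_{i+1}` identifies `∂_i f`, `D_i f` and `T_i f`: the last
because `∂_i f` is symmetric in `x_i, x_{i+1}` while `Π_{i+1} R_i = Π_{i+1} s_i`.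

For the creation identity put `ρ_{k,n} = R_k^{n-k} Π_{n+1}` (`bsTrunc k n`), the substitution
keeping `x_j` for `j < k`, sending `x_n ↦ x_k` and every other variable to `0`. Since
`ρ_{k,i} x_i = x_k` we get `B_i g = ∑_{k ≤ i} ρ_{k,i}(x_i g)`; since moreover `ρ_{k,i} x_{i+1} = 0`
and `ρ_{k,i} s_i = ρ_{k,i+1}`, this gives `B_i ∂_i f = ∑_{k ≤ i} (ρ_{k,i} - ρ_{k,i+1}) f`.
These sums telescope: `∑_{i < N} B_i ∂_i f = Π_N f - Π_0 f - ∑_{k < N} (ρ_{k,N} - Π_k) f`, and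
once `f` only involves `x_0, …, x_{N-1}` the error terms vanish, `Π_N f = f`, and `Π_0 f` is the
constant term of `f`.
-/

lemma aeval_congr_vars {σ R S : Type*} [CommSemiring R] [CommSemiring S] [Algebra R S]
    {g₁ g₂ : σ → S} {f : MvPolynomial σ R} (h : ∀ j ∈ f.vars, g₁ j = g₂ j) :
    aeval g₁ f = aeval g₂ f :=
  eval₂Hom_congr' rfl (fun j hj _ => h j hj) rfl

lemma X_sub_X_succ_ne_zero (i : ℕ) : (X i - X (i+1) : Pol) ≠ 0 := by
  rw [sub_ne_zero]
  exact (X_injective (σ := ℕ) (R := ℤ)).ne (by omega)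

lemma mul_exactDiv {d f : Pol} (h : d ∣ f) : d * exactDiv d f = f := by
  have h' : ∃ g, d * g = f := h.imp fun _ hg => hg.symm
  rw [exactDiv, dif_pos h']
  exact h'.choose_spec

lemma exactDiv_eq_of_mul_eq {d f g : Pol} (hd : d ≠ 0) (h : d * g = f) : exactDiv d f = g :=
  mul_left_cancel₀ hd (by rw [mul_exactDiv ⟨g, h.symm⟩, h])

lemma swapVar_X (i j : ℕ) : swapVar i (X j) = X (Equiv.swap i (i+1) j) := by
  simp [swapVar]

lemma swapVar_swapVar (i : ℕ) (f : Pol) : swapVar i (swapVar i f) = f := by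
  rw [swapVar, swapVar, rename_rename, ← Equiv.coe_trans, Equiv.swap_swap, Equiv.coe_refl,
    rename_id_apply]

lemma X_sub_X_succ_dvd_sub_swapVar (i : ℕ) (f : Pol) :
    (X i - X (i+1) : Pol) ∣ f - swapVar i f := by
  induction f using MvPolynomial.induction_on with
  | C a => simp [swapVar]
  | add p q hp hq =>
    have : p + q - swapVar i (p + q) = (p - swapVar i p) + (q - swapVar i q) := by
      simp only [swapVar, map_add]; ring
    exact this ▸ dvd_add hp hq
  | mul_X p j hp =>
    have hX : (X i - X (i+1) : Pol) ∣ X j - swapVar i (X j) := by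
      rw [swapVar_X]
      rcases eq_or_ne j i with rfl | hi
      · simp
      rcases eq_or_ne j (i+1) with rfl | hi'
      · exact ⟨-1, by rw [Equiv.swap_apply_right]; ring⟩
      · simp [Equiv.swap_apply_of_ne_of_ne hi hi']
    have : p * X j - swapVar i (p * X j)
        = (p - swapVar i p) * X j + swapVar i p * (X j - swapVar i (X j)) := by
      simp only [swapVar, map_mul]; ring
    exact this ▸ dvd_add (hp.mul_right _) (hX.mul_left _)

lemma mul_ddiff (i : ℕ) (f : Pol) :
    (X i - X (i+1) : Pol) * ddiff i f = f - swapVar i f :=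
  mul_exactDiv (X_sub_X_succ_dvd_sub_swapVar i f)

lemma swapVar_ddiff (i : ℕ) (f : Pol) : swapVar i (ddiff i f) = ddiff i f := by
  have h := congrArg (rename (Equiv.swap i (i+1))) (mul_ddiff i f)
  rw [map_mul, map_sub, map_sub, rename_X, rename_X, Equiv.swap_apply_left,
    Equiv.swap_apply_right] at h
  change _ * swapVar i (ddiff i f) = swapVar i f - swapVar i (swapVar i f) at h
  rw [swapVar_swapVar] at h
  refine (exactDiv_eq_of_mul_eq (X_sub_X_succ_ne_zero i) ?_).symm
  linear_combination -h

@[simp]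
lemma truncOp_X (n j : ℕ) : truncOp n (X j) = if j < n then X j else 0 := by
  simp [truncOp]

@[simp]
lemma BS_X (i j : ℕ) : BS i (X j) = if j < i then X j else if j = i then 0 else X (j-1) := by
  simp [BS]

lemma truncOp_truncOp (n : ℕ) (f : Pol) : truncOp n (truncOp n f) = truncOp n f := by
  rw [← AlgHom.comp_apply]
  congr 1
  refine MvPolynomial.algHom_ext fun j => ?_
  by_cases h : j < n <;> simp [h]

lemma truncOp_BS (i : ℕ) (f : Pol) :
    truncOp (i+1) (BS i f) = truncOp (i+1) (swapVar i f) := by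
  rw [swapVar, ← AlgHom.comp_apply, ← AlgHom.comp_apply]
  congr 1
  refine MvPolynomial.algHom_ext fun j => ?_
  simp only [AlgHom.comp_apply, BS_X, rename_X, Equiv.swap_apply_def]
  split_ifs <;> simp only [map_zero, truncOp_X] <;> split_ifs <;>
    first | rfl | omega | (congr 1; omega)

lemma truncOp_eq_self_of_vars {n : ℕ} {f : Pol} (hf : ∀ j ∈ f.vars, j < n) :
    truncOp n f = f := by
  conv_rhs => rw [← aeval_X_left_apply f]
  exact aeval_congr_vars fun j hj => if_pos (hf j hj)

lemma truncOp_zero_apply (f : Pol) : truncOp 0 f = C (constantCoeff f) :=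
  aeval_eq_constantCoeff_of_vars fun _ _ => rfl

lemma Bop_congr {i : ℕ} {f g : Pol} (h : truncOp (i+1) f = truncOp (i+1) g) :
    Bop i f = Bop i g := by
  rw [Bop, Bop, h]

lemma Bop_Tq (i : ℕ) (f : Pol) : Bop i (Tq i f) = Bop i (ddiff i f) :=
  Bop_congr (by rw [Tq, truncOp_BS, swapVar_ddiff])

lemma Bop_Dop (i : ℕ) (f : Pol) : Bop i (Dop i f) = Bop i (ddiff i f) :=
  Bop_congr (truncOp_truncOp _ _)

noncomputable def bsTrunc (k n : ℕ) : Pol →ₐ[ℤ] Pol :=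
  aeval fun j => if j < k then X j else if j = n then X k else 0

@[simp]
lemma bsTrunc_X (k n j : ℕ) :
    bsTrunc k n (X j) = if j < k then X j else if j = n then X k else 0 := by
  simp [bsTrunc]

lemma BSit_X (k m j : ℕ) :
    BSit k m (X j : Pol) = if j < k then X j else if j < k + m then 0 else X (j - m) := by
  induction m with
  | zero =>
    show X j = _
    split_ifs <;> first | rfl | omega
  | succ m ih =>
    rw [BSit, Function.iterate_succ_apply', ← BSit, ih]
    split_ifs <;> simp only [map_zero, BS_X] <;> (try split_ifs) <;> first | rfl | omega

lemma BSit_eq_pow (k m : ℕ) : BSit k m = ⇑(BS k ^ m) := by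
  rw [AlgHom.coe_pow]; rfl

lemma BSit_truncOp {k n : ℕ} (hk : k ≤ n) (f : Pol) :
    BSit k (n - k) (truncOp (n+1) f) = bsTrunc k n f := by
  rw [BSit_eq_pow, ← AlgHom.comp_apply]
  congr 1
  refine MvPolynomial.algHom_ext fun j => ?_
  rw [AlgHom.comp_apply, ← BSit_eq_pow, truncOp_X, bsTrunc_X]
  by_cases hj : j < n + 1
  · rw [if_pos hj, BSit_X]
    split_ifs <;> first | rfl | omega | (congr 1; omega)
  · rw [if_neg hj, BSit_eq_pow, map_zero, if_neg (by omega), if_neg (by omega)]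

lemma Bop_eq_sum_bsTrunc (i : ℕ) (g : Pol) :
    Bop i g = ∑ k ∈ Finset.range (i+1), bsTrunc k i (X i * g) := by
  refine Finset.sum_congr rfl fun k hk => ?_
  have hk : k ≤ i := Nat.lt_succ_iff.1 (Finset.mem_range.1 hk)
  rw [BSit_truncOp hk, map_mul, bsTrunc_X, if_neg (by omega), if_pos rfl]

lemma bsTrunc_swapVar {k i : ℕ} (hk : k ≤ i) (f : Pol) :
    bsTrunc k i (swapVar i f) = bsTrunc k (i+1) f := by
  rw [swapVar, ← AlgHom.comp_apply]
  congr 1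
  refine MvPolynomial.algHom_ext fun j => ?_
  simp only [AlgHom.comp_apply, rename_X, Equiv.swap_apply_def]
  split_ifs <;> simp only [bsTrunc_X] <;> split_ifs <;> first | rfl | omega

lemma Bop_ddiff (i : ℕ) (f : Pol) :
    Bop i (ddiff i f) = ∑ k ∈ Finset.range (i+1), (bsTrunc k i f - bsTrunc k (i+1) f) := by
  rw [Bop_eq_sum_bsTrunc]
  refine Finset.sum_congr rfl fun k hk => ?_
  have hk : k ≤ i := Nat.lt_succ_iff.1 (Finset.mem_range.1 hk)
  have hX : bsTrunc k i (X (i+1)) = 0 := by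
    rw [bsTrunc_X, if_neg (by omega), if_neg (by omega)]
  calc bsTrunc k i (X i * ddiff i f)
      = bsTrunc k i ((X i - X (i+1)) * ddiff i f) := by simp only [map_mul, map_sub, hX, sub_zero]
    _ = bsTrunc k i f - bsTrunc k (i+1) f := by rw [mul_ddiff, map_sub, bsTrunc_swapVar hk]

lemma bsTrunc_self (n : ℕ) (f : Pol) : bsTrunc n n f = truncOp (n+1) f :=
  aeval_congr_vars fun j _ => by
    split_ifs <;> first | rfl | omega | (congr 1; omega)

lemma bsTrunc_eq_truncOp_of_vars {k n : ℕ} {f : Pol} (hf : ∀ j ∈ f.vars, j < n) :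
    bsTrunc k n f = truncOp k f :=
  aeval_congr_vars fun j hj => by
    have := hf j hj
    split_ifs <;> first | rfl | omega

lemma sum_range_Bop_ddiff (f : Pol) (N : ℕ) :
    ∑ i ∈ Finset.range N, Bop i (ddiff i f) =
      truncOp N f - truncOp 0 f - ∑ k ∈ Finset.range N, (bsTrunc k N f - truncOp k f) := by
  induction N with
  | zero => simp
  | succ N ih =>
    rw [Finset.sum_range_succ, ih, Bop_ddiff]
    simp only [Finset.sum_sub_distrib, Finset.sum_range_succ, bsTrunc_self]
    ring

lemma Bop_ddiff_eq_zero_of_vars {n i : ℕ} {f : Pol} (hf : ∀ j ∈ f.vars, j < n) (hi : n ≤ i) :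
    Bop i (ddiff i f) = 0 := by
  rw [Bop_ddiff]
  refine Finset.sum_eq_zero fun k _ => ?_
  rw [bsTrunc_eq_truncOp_of_vars fun j hj => (hf j hj).trans_le hi,
    bsTrunc_eq_truncOp_of_vars fun j hj => (hf j hj).trans_le (hi.trans i.le_succ), sub_self]

lemma sum_range_Bop_ddiff_eq_self {N : ℕ} {f : Pol} (hf : ∀ j ∈ f.vars, j < N)
    (h0 : constantCoeff f = 0) :
    ∑ i ∈ Finset.range N, Bop i (ddiff i f) = f := by
  rw [sum_range_Bop_ddiff, truncOp_eq_self_of_vars hf, truncOp_zero_apply, h0, map_zero,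
    Finset.sum_eq_zero fun k _ => by rw [bsTrunc_eq_truncOp_of_vars hf, sub_self]]
  simp

lemma finite_and_finsum_Bop_ddiff {f : Pol} (h0 : constantCoeff f = 0) :
    {i : ℕ | Bop i (ddiff i f) ≠ 0}.Finite ∧ ∑ᶠ i : ℕ, Bop i (ddiff i f) = f := by
  obtain ⟨N, hN⟩ := f.vars.exists_nat_subset_range
  have hf : ∀ j ∈ f.vars, j < N := fun j hj => Finset.mem_range.1 (hN hj)
  have hsupp : (Function.support fun i => Bop i (ddiff i f)) ⊆ Finset.range N :=
    fun i hi => Finset.mem_coe.2 <| Finset.mem_range.2 <|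
      not_le.1 fun hNi => hi (Bop_ddiff_eq_zero_of_vars hf hNi)
  exact ⟨(Finset.range N).finite_toSet.subset hsupp,
    (finsum_eq_sum_of_support_subset _ hsupp).trans (sum_range_Bop_ddiff_eq_self hf h0)⟩

/-- `B_i∘D_i = B_i∘T_i = B_i∘∂_i` on `Pol`; consequently the slide
creators are simultaneously creation operators for the `∂_i` and the `T_i`. -/
theorem stmt_14 :
    (∀ (i : ℕ) (f : Pol),
      Bop i (Dop i f) = Bop i (Tq i f) ∧ Bop i (Tq i f) = Bop i (ddiff i f)) ∧
    ∀ f : Pol, constantCoeff f = 0 →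
      ({i : ℕ | Bop i (ddiff i f) ≠ 0}.Finite ∧ ∑ᶠ i : ℕ, Bop i (ddiff i f) = f) ∧
      ({i : ℕ | Bop i (Tq i f) ≠ 0}.Finite ∧ ∑ᶠ i : ℕ, Bop i (Tq i f) = f) := by
  refine ⟨fun i f => ⟨(Bop_Dop i f).trans (Bop_Tq i f).symm, Bop_Tq i f⟩, fun f h0 => ?_⟩
  simp only [Bop_Tq]
  exact ⟨finite_and_finsum_Bop_ddiff h0, finite_and_finsum_Bop_ddiff h0⟩
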